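/- In the construction with parameter l, the intersection A_{2l} ∩ B_{2l} equals the singleton {m_{2l−1}} = {2^{2l}−1}, while A_{2l} ∪ B_{2l} = [0, m_{2l}−1] where m_{2l} = 2^{2l+1}−1. -/
import Mathlib


/-- Representation function: number of unordered representations of `n`
as `s' + s''` with `s' < s''`, both in `S`. -/
noncomputable def R (S : Set ℕ) (n : ℕ) : ℕ :=
  {p : ℕ × ℕ | p.1 ∈ S ∧ p.2 ∈ S ∧ p.1 < p.2 ∧ p.1 + p.2 = n}.ncard

/-- Translate of a set: `m + S`. -/
def tr (m : ℕ) (S : Set ℕ) : Set ℕ := (m + ·) '' S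


/-- Iterated construction: `A_{i+1} = A_i ∪ (m_i + B_i)`, `B_{i+1} = B_i ∪ (m_i + A_i)`. -/
def AB (A0 B0 : Set ℕ) (m : ℕ → ℕ) : ℕ → Set ℕ × Set ℕ
  | 0 => (A0, B0)
  | i + 1 => ((AB A0 B0 m i).1 ∪ tr (m i) (AB A0 B0 m i).2,
              (AB A0 B0 m i).2 ∪ tr (m i) (AB A0 B0 m i).1)


/-- The sequence `m_i` from the paper, with parameter `l`. -/
def mseq (l i : ℕ) : ℕ :=
  if i ≤ 2*l - 2 then 2^(i+1)
  else if i = 2*l - 1 then 2^(2*l) - 1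
  else 2^(i+1) - 2^(i - 2*l)

lemma mem_tr {m x : ℕ} {S : Set ℕ} : x ∈ tr m S ↔ ∃ a ∈ S, m + a = x := by
  simp [tr, Set.mem_image]

lemma Iio_union_tr (m n : ℕ) (h : m ≤ n) :
    Set.Iio n ∪ tr m (Set.Iio n) = Set.Iio (m + n) := by
  ext x
  simp only [Set.mem_union, mem_tr, Set.mem_Iio]
  constructor
  · rintro (h1 | ⟨a, ha, rfl⟩) <;> omega
  · intro hx
    by_cases hxn : x < n
    · exact Or.inl hxn
    · exact Or.inr ⟨x - m, by omega, by omega⟩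

lemma key (l : ℕ) (hl : 1 ≤ l) : ∀ i, i ≤ 2*l - 1 →
    (AB {0} {1} (mseq l) i).1 ∪ (AB {0} {1} (mseq l) i).2 = Set.Iio (2^(i+1)) ∧
    (AB {0} {1} (mseq l) i).1 ∩ (AB {0} {1} (mseq l) i).2 = ∅ ∧
    (0:ℕ) ∈ (AB {0} {1} (mseq l) i).1 ∧
    (2^(i+1) - 1 : ℕ) ∈
      (if i % 2 = 1 then (AB {0} {1} (mseq l) i).1 else (AB {0} {1} (mseq l) i).2) := by
  intro i
  induction i with
  | zero =>
    intro _
    refine ⟨?_, ?_, rfl, ?_⟩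
    · ext x; simp [AB, Set.mem_Iio]; omega
    · ext x; simp [AB]
    · simp [AB]
  | succ i ih =>
    intro h
    have hi : i ≤ 2*l - 1 := by omega
    obtain ⟨hU, hI, h0, hpar⟩ := ih hi
    set A := (AB {0} {1} (mseq l) i).1 with hA
    set B := (AB {0} {1} (mseq l) i).2 with hB
    have hm : mseq l i = 2^(i+1) := by
      unfold mseq; rw [if_pos (by omega)]
    have hstep : AB {0} {1} (mseq l) (i+1) = (A ∪ tr (2^(i+1)) B, B ∪ tr (2^(i+1)) A) := by
      simp [AB, hm, ← hA, ← hB]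
    rw [hstep]
    have hAsub : A ⊆ Set.Iio (2^(i+1)) := hU ▸ Set.subset_union_left
    have hBsub : B ⊆ Set.Iio (2^(i+1)) := hU ▸ Set.subset_union_right
    have hpow : 0 < 2^(i+1) := pow_pos (by norm_num) _
    have hpow2 : 2^(i+1+1) = 2^(i+1) + 2^(i+1) := by ring
    refine ⟨?_, ?_, Or.inl h0, ?_⟩
    · have heq : (A ∪ tr (2^(i+1)) B) ∪ (B ∪ tr (2^(i+1)) A)
          = (A ∪ B) ∪ tr (2^(i+1)) (A ∪ B) := by
        simp only [tr, Set.image_union]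
        ext x; simp only [Set.mem_union]; tauto
      rw [heq, hU, Iio_union_tr (2^(i+1)) (2^(i+1)) le_rfl, hpow2]
    · ext x
      simp only [Set.mem_inter_iff, Set.mem_union, Set.mem_empty_iff_false, iff_false]
      rintro ⟨h1 | h1, h2 | h2⟩
      · exact absurd (Set.mem_inter h1 h2) (by rw [hI]; exact id)
      · obtain ⟨a, ha, hae⟩ := mem_tr.mp h2
        have hlt := hAsub h1
        simp only [Set.mem_Iio] at hlt; omega
      · obtain ⟨b, hb, hbe⟩ := mem_tr.mp h1
        have hlt := hBsub h2
        simp only [Set.mem_Iio] at hlt; omega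
      · obtain ⟨b, hb, hbe⟩ := mem_tr.mp h1
        obtain ⟨a, ha, hae⟩ := mem_tr.mp h2
        have : a = b := by omega
        subst this
        exact absurd (Set.mem_inter ha hb) (by rw [hI]; exact id)
    · rcases Nat.even_or_odd i with he | ho
      · have h1 : i % 2 = 0 := Nat.even_iff.mp he
        have h2 : (i+1) % 2 = 1 := by omega
        rw [h2]; simp only [if_pos rfl]
        rw [h1] at hpar; simp only [if_neg (by norm_num : ¬(0=1))] at hpar
        exact Or.inr (mem_tr.mpr ⟨2^(i+1) - 1, hpar, by omega⟩)
      · have h1 : i % 2 = 1 := Nat.odd_iff.mp ho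
        have h2 : (i+1) % 2 = 0 := by omega
        rw [h2]; simp only [if_neg (by norm_num : ¬(0=1))]
        rw [h1] at hpar; simp only [if_pos rfl] at hpar
        exact Or.inr (mem_tr.mpr ⟨2^(i+1) - 1, hpar, by omega⟩)

theorem stmt_12 (l : ℕ) (hl : 1 ≤ l) :
    (AB {0} {1} (mseq l) (2 * l)).1 ∩ (AB {0} {1} (mseq l) (2 * l)).2
      = {2 ^ (2 * l) - 1} ∧
    (AB {0} {1} (mseq l) (2 * l)).1 ∪ (AB {0} {1} (mseq l) (2 * l)).2
      = Set.Iio (2 ^ (2 * l + 1) - 1) := by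
  obtain ⟨hU, hI, h0, hpar⟩ := key l hl (2*l - 1) le_rfl
  set A := (AB {0} {1} (mseq l) (2*l-1)).1 with hA
  set B := (AB {0} {1} (mseq l) (2*l-1)).2 with hB
  have hje : (2*l-1) + 1 = 2*l := by omega
  have hj : 2*l = (2*l-1) + 1 := by omega
  rw [hje] at hU hpar
  have hm : mseq l (2*l-1) = 2^(2*l) - 1 := by
    unfold mseq; rw [if_neg (by omega), if_pos rfl]
  have hodd : (2*l-1) % 2 = 1 := by omega
  rw [hodd] at hpar; simp only [if_pos rfl] at hpar
  have hstep : AB {0} {1} (mseq l) (2*l)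
      = (A ∪ tr (mseq l (2*l-1)) B, B ∪ tr (mseq l (2*l-1)) A) := by
    rw [hj]; simp [AB, ← hA, ← hB]
  rw [hstep, hm]
  have hAsub : A ⊆ Set.Iio (2^(2*l)) := hU ▸ Set.subset_union_left
  have hBsub : B ⊆ Set.Iio (2^(2*l)) := hU ▸ Set.subset_union_right
  have hpow : 0 < 2^(2*l) := pow_pos (by norm_num) _
  have hpow2 : 2^(2*l+1) = 2^(2*l) + 2^(2*l) := by ring
  constructor
  · ext x
    simp only [Set.mem_inter_iff, Set.mem_union, Set.mem_singleton_iff]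
    constructor
    · rintro ⟨h1 | h1, h2 | h2⟩
      · exact absurd (Set.mem_inter h1 h2) (by rw [hI]; exact id)
      · obtain ⟨a, ha, hae⟩ := mem_tr.mp h2
        have hlt := hAsub h1; simp only [Set.mem_Iio] at hlt; omega
      · obtain ⟨b, hb, hbe⟩ := mem_tr.mp h1
        have hlt := hBsub h2; simp only [Set.mem_Iio] at hlt
        have hb0 : b = 0 := by omega
        subst hb0
        exact absurd (Set.mem_inter h0 hb) (by rw [hI]; exact id)
      · obtain ⟨b, hb, hbe⟩ := mem_tr.mp h1
        obtain ⟨a, ha, hae⟩ := mem_tr.mp h2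
        have : a = b := by omega
        subst this
        exact absurd (Set.mem_inter ha hb) (by rw [hI]; exact id)
    · rintro rfl
      exact ⟨Or.inl hpar, Or.inr (mem_tr.mpr ⟨0, h0, by omega⟩)⟩
  · have heq : (A ∪ tr (2^(2*l)-1) B) ∪ (B ∪ tr (2^(2*l)-1) A)
        = (A ∪ B) ∪ tr (2^(2*l)-1) (A ∪ B) := by
      simp only [tr, Set.image_union]
      ext x; simp only [Set.mem_union]; tauto
    have e : 2^(2*l)-1 + 2^(2*l) = 2^(2*l+1) - 1 := by omega
    rw [heq, hU, Iio_union_tr (2^(2*l)-1) (2^(2*l)) (by omega), e]
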